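/- arXiv:1411.3113 — 4 statements merged into one kernel-verified Lean document; each statement's English description precedes it below -/
import Mathlib

section
/- The ball B = {u ∈ ℝ^J : |u|² ≤ 2JF²} is forward invariant for the Lorenz '96 equation: if u is a solution on [0,∞) with |u(0)|² ≤ 2JF², then |u(t)|² ≤ 2JF² for all t ≥ 0. -/
/-!
The nonlinearity conserves energy, `⟪u, B(u,u)⟫ = 0`, so `E = ‖u‖²` satisfies
`E' = -2E + 2⟪u, f⟫ ≤ -E + ‖f‖² = JF² - E`. Hence `e^t (E(t) - JF²)` is nonincreasing, and
`E` never exceeds `max (E(0)) (JF²) ≤ 2JF²`.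
-/

open scoped RealInnerProductSpace

noncomputable section

/-- The Lorenz '96 bilinear map `B` on `ℝ^J`, with cyclic indexing via `ZMod J`:
`B(u,w)^(j) = -(1/2)[w^(j-1)u^(j+1) + u^(j-1)w^(j+1) - w^(j-2)u^(j-1) - u^(j-2)w^(j-1)]`. -/
def L96B {J : ℕ} [NeZero J] (u w : EuclideanSpace ℝ (ZMod J)) :
    EuclideanSpace ℝ (ZMod J) :=
  WithLp.toLp 2 (fun j => -(1/2 : ℝ) * (w (j - 1) * u (j + 1) + u (j - 1) * w (j + 1)
    - w (j - 2) * u (j - 1) - u (j - 2) * w (j - 1)))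

/-- The constant forcing vector `f = (F, ..., F)`. -/
def L96f {J : ℕ} [NeZero J] (F : ℝ) : EuclideanSpace ℝ (ZMod J) := WithLp.toLp 2 (fun _ => F)

/-- `u` solves the Lorenz '96 equation `u' = -u - B(u,u) + f` on the set `I`. -/
def L96Sol {J : ℕ} [NeZero J] (F : ℝ) (I : Set ℝ)
    (u : ℝ → EuclideanSpace ℝ (ZMod J)) : Prop :=
  ∀ t ∈ I, HasDerivAt u (-u t - L96B (u t) (u t) + L96f F) t

/-- The projection `P` setting to zero every third coordinate
(those with 1-based index `≡ 0 mod 3`, i.e. `ZMod J`-index with value `≡ 0 mod 3`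
when `3 ∣ J`). -/
def L96P {J : ℕ} [NeZero J] (u : EuclideanSpace ℝ (ZMod J)) :
    EuclideanSpace ℝ (ZMod J) :=
  WithLp.toLp 2 (fun j => if j.val % 3 = 0 then 0 else u j)

/-- The complementary projection `Q = I - P`. -/
def L96Q {J : ℕ} [NeZero J] (u : EuclideanSpace ℝ (ZMod J)) :
    EuclideanSpace ℝ (ZMod J) :=
  u - L96P u

lemma le_max_of_hasDerivAt_le_sub {f f' : ℝ → ℝ} {c : ℝ}
    (hf : ∀ s ∈ Set.Ici (0 : ℝ), HasDerivAt f (f' s) s)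
    (hbound : ∀ s ∈ Set.Ici (0 : ℝ), f' s ≤ c - f s) :
    ∀ t, 0 ≤ t → f t ≤ max (f 0) c := by
  intro t ht
  set h : ℝ → ℝ := fun s => Real.exp s * (f s - c)
  have hh : ∀ s ∈ Set.Ici (0 : ℝ),
      HasDerivAt h (Real.exp s * (f s - c) + Real.exp s * f' s) s :=
    fun s hs => (Real.hasDerivAt_exp s).mul ((hf s hs).sub_const c)
  have hanti : AntitoneOn h (Set.Ici 0) := by
    refine antitoneOn_of_hasDerivWithinAt_nonpos (convex_Ici 0)
      (fun s hs => (hh s hs).continuousAt.continuousWithinAt)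
      (fun s hs => (hh s (interior_subset hs)).hasDerivWithinAt) fun s hs => ?_
    have := hbound s (interior_subset hs)
    nlinarith [Real.exp_pos s]
  have hdecay : Real.exp t * (f t - c) ≤ f 0 - c := by
    simpa [h] using hanti Set.self_mem_Ici ht ht
  rcases le_or_gt (f t) c with hle | hgt
  · exact le_max_of_le_right hle
  · have := Real.one_le_exp ht
    exact le_max_of_le_left (by nlinarith)

lemma inner_L96B_self {J : ℕ} [NeZero J] (v : EuclideanSpace ℝ (ZMod J)) :
    ⟪v, L96B v v⟫ = 0 := by
  have hshift : ∑ j : ZMod J, v (j - 1) * v j * v (j + 1)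
      = ∑ j : ZMod J, v (j - 2) * v (j - 1) * v j := by
    refine Fintype.sum_equiv (Equiv.addRight (1 : ZMod J)) _ _ fun j => ?_
    simp only [Equiv.coe_addRight, show j + 1 - 2 = j - 1 by ring, add_sub_cancel_right]
  calc ⟪v, L96B v v⟫ = ∑ j : ZMod J, v j * L96B v v j := by
        simp [PiLp.inner_apply, mul_comm]
    _ = ∑ j : ZMod J, (v (j - 2) * v (j - 1) * v j - v (j - 1) * v j * v (j + 1)) :=
        Finset.sum_congr rfl fun j _ => by simp only [L96B, WithLp.ofLp_toLp]; ring
    _ = 0 := by rw [Finset.sum_sub_distrib, hshift, sub_self]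

lemma norm_L96f_sq {J : ℕ} [NeZero J] (F : ℝ) :
    ‖(L96f F : EuclideanSpace ℝ (ZMod J))‖ ^ 2 = J * F ^ 2 := by
  simp [EuclideanSpace.norm_sq_eq, L96f]

lemma two_mul_inner_L96_vectorField_le {J : ℕ} [NeZero J] (F : ℝ)
    (v : EuclideanSpace ℝ (ZMod J)) :
    2 * ⟪v, -v - L96B v v + L96f F⟫ ≤ J * F ^ 2 - ‖v‖ ^ 2 := by
  have hcs := real_inner_le_norm v (L96f F)
  have hsq := sq_nonneg (‖v‖ - ‖(L96f F : EuclideanSpace ℝ (ZMod J))‖)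
  rw [inner_add_right, inner_sub_right, inner_neg_right, inner_L96B_self,
    real_inner_self_eq_norm_sq, ← norm_L96f_sq F]
  nlinarith

theorem l96_forward_invariant_general {J : ℕ} [NeZero J] (F : ℝ)
    (u : ℝ → EuclideanSpace ℝ (ZMod J)) (hu : L96Sol F (Set.Ici 0) u)
    (hu0 : ‖u 0‖ ^ 2 ≤ 2 * J * F ^ 2) :
    ∀ t : ℝ, 0 ≤ t → ‖u t‖ ^ 2 ≤ 2 * J * F ^ 2 := by
  intro t ht
  have henergy := le_max_of_hasDerivAt_le_sub (f := fun s => ‖u s‖ ^ 2) (c := J * F ^ 2)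
    (fun s hs => (hu s hs).norm_sq) (fun s _ => two_mul_inner_L96_vectorField_le F (u s)) t ht
  have hc : 0 ≤ (J : ℝ) * F ^ 2 := by positivity
  exact henergy.trans (max_le hu0 (by linarith))

/-- the ball `{u : |u|² ≤ 2JF²}` is forward invariant for Lorenz '96. -/
theorem l96_forward_invariant {J : ℕ} [NeZero J] (hJ : 3 ≤ J) (F : ℝ)
    (u : ℝ → EuclideanSpace ℝ (ZMod J)) (hu : L96Sol F (Set.Ici 0) u)
    (hu0 : ‖u 0‖ ^ 2 ≤ 2 * J * F ^ 2) :
    ∀ t : ℝ, 0 ≤ t → ‖u t‖ ^ 2 ≤ 2 * J * F ^ 2 :=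
  l96_forward_invariant_general F u hu hu0
end
end

section
/- For every u ∈ ℝ^J one has B(Qu, Qu) = 0. -/
open scoped RealInnerProductSpace

noncomputable section

theorem L96B_self_apply {J : ℕ} [NeZero J] (v : EuclideanSpace ℝ (ZMod J)) (j : ZMod J) :
    L96B v v j = -(v (j - 1) * (v (j + 1) - v (j - 2))) := by
  simp only [L96B, PiLp.toLp_apply]
  ring

theorem L96Q_apply {J : ℕ} [NeZero J] (u : EuclideanSpace ℝ (ZMod J)) (j : ZMod J) :
    L96Q u j = if j.val % 3 = 0 then u j else 0 := by
  simp only [L96Q, L96P, PiLp.sub_apply]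
  split_ifs <;> simp

/-- Each term of `B(v, v)^(j) = -v^(j-1) (v^(j+1) - v^(j-2))` pairs two indices at cyclic
distance `1` or `2`. -/
theorem L96B_self_eq_zero_of_support_sparse {J : ℕ} [NeZero J] {S : Set (ZMod J)}
    (hS : ∀ s ∈ S, s + 1 ∉ S ∧ s + 2 ∉ S) {v : EuclideanSpace ℝ (ZMod J)}
    (hv : ∀ j ∉ S, v j = 0) : L96B v v = 0 := by
  ext j
  rw [L96B_self_apply, PiLp.zero_apply]
  by_cases hj : j - 1 ∈ S
  · have hnext : v (j + 1) = 0 := hv _ fun h => (hS _ hj).2 (by convert h using 1; ring)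
    have hprev : v (j - 2) = 0 := hv _ fun h => (hS _ h).1 (by convert hj using 1; ring)
    rw [hnext, hprev]
    ring
  · rw [hv _ hj]
    ring

theorem ZMod.val_add_natCast_mod_of_dvd {J m : ℕ} [NeZero J] (hm : m ∣ J) (j : ZMod J) (k : ℕ) :
    (j + k).val % m = (j.val + k) % m := by
  rw [ZMod.val_add, ZMod.val_natCast, Nat.mod_mod_of_dvd _ hm, Nat.add_mod, Nat.mod_mod_of_dvd _ hm,
    ← Nat.add_mod]

theorem ZMod.val_add_mod_three_ne_zero {J : ℕ} [NeZero J] (h3 : 3 ∣ J) {s : ZMod J}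
    (hs : s.val % 3 = 0) : (s + 1).val % 3 ≠ 0 ∧ (s + 2).val % 3 ≠ 0 := by
  have h1 := ZMod.val_add_natCast_mod_of_dvd h3 s 1
  have h2 := ZMod.val_add_natCast_mod_of_dvd h3 s 2
  rw [Nat.cast_one] at h1
  rw [Nat.cast_ofNat] at h2
  omega

theorem l96_BQQ_zero_general {J J' : ℕ} [NeZero J] (hJ : J = 3 * J')
    (u : EuclideanSpace ℝ (ZMod J)) :
    L96B (L96Q u) (L96Q u) = 0 :=
  L96B_self_eq_zero_of_support_sparse (S := {j | j.val % 3 = 0})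
    (fun _ hs => ZMod.val_add_mod_three_ne_zero ⟨J', hJ⟩ hs)
    (fun j hj => by rw [L96Q_apply]; exact if_neg hj)

/-- `B(Qu, Qu) = 0` when `J = 3J'`. -/
theorem l96_BQQ_zero {J J' : ℕ} [NeZero J] (hJ' : 1 ≤ J') (hJ : J = 3 * J')
    (u : EuclideanSpace ℝ (ZMod J)) :
    L96B (L96Q u) (L96Q u) = 0 :=
  l96_BQQ_zero_general hJ u
end
end

section
/- (Coercivity of the nudged linearization.) Let K > 0, η > 0, and let v ∈ ℝ^J with |v|² ≤ K. Then for every δ ∈ ℝ^J, ⟨δ + 2B(v,δ) + B(δ,δ) + (1/η)Pδ, δ⟩ ≥ (1 − c²Kη/4)·|δ|². -/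
open scoped RealInnerProductSpace

noncomputable section

/-!
The cubic term vanishes because `B` conserves energy, `⟪B(u,u), u⟫ = 0` (a telescoping sum under
the cyclic shift of indices). Polarizing this identity at `v ± δ` turns the cross term
`2⟪B(v,δ), δ⟫` into `-⟪B(δ,δ), v⟫`, which the hypothesis on `B` bounds by `c‖δ‖‖v‖‖Pδ‖`.
Young's inequality then splits this into `c²Kη/4 ‖δ‖²` plus `‖Pδ‖²/η`, and the latter is exactly
the contribution `(1/η)⟪Pδ, δ⟫` of the nudging term.
-/

lemma EuclideanSpace.real_inner_eq_sum {ι : Type*} [Fintype ι] (x y : EuclideanSpace ℝ ι) :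
    ⟪x, y⟫ = ∑ i, x i * y i := by
  simp only [PiLp.inner_apply, RCLike.inner_apply, conj_trivial, mul_comm]

lemma mul_le_mul_sq_add_sq_div {η : ℝ} (hη : 0 < η) (x y : ℝ) :
    x * y ≤ η / 4 * x ^ 2 + y ^ 2 / η := by
  have key : η / 4 * x ^ 2 + y ^ 2 / η - x * y = (y - η * x / 2) ^ 2 / η := by
    field_simp
    ring
  have : 0 ≤ (y - η * x / 2) ^ 2 / η := by positivity
  linarith

section L96

variable {J : ℕ} [NeZero J]

lemma inner_L96B_self_self (u : EuclideanSpace ℝ (ZMod J)) : ⟪L96B u u, u⟫ = 0 := by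
  have shift : ∑ j : ZMod J, u (j - 2) * u (j - 1) * u j
      = ∑ j : ZMod J, u (j - 1) * u j * u (j + 1) :=
    Fintype.sum_equiv (Equiv.subRight 1) _ _ fun j => by
      simp only [Equiv.subRight_apply, show j - 1 - 1 = j - 2 by ring, sub_add_cancel]
  calc ⟪L96B u u, u⟫
      = ∑ j : ZMod J, (u (j - 2) * u (j - 1) * u j - u (j - 1) * u j * u (j + 1)) := by
        rw [EuclideanSpace.real_inner_eq_sum]
        refine Finset.sum_congr rfl fun j _ => ?_
        simp only [L96B, PiLp.toLp_apply]
        ring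
    _ = 0 := by rw [Finset.sum_sub_distrib, shift, sub_self]

lemma inner_L96B_add_add_inner_L96B_sub (v δ : EuclideanSpace ℝ (ZMod J)) :
    ⟪L96B (v + δ) (v + δ), v + δ⟫ + ⟪L96B (v - δ) (v - δ), v - δ⟫
      = 2 * ⟪L96B v v, v⟫ + 2 * ⟪L96B δ δ, v⟫ + 4 * ⟪L96B v δ, δ⟫ := by
  simp only [EuclideanSpace.real_inner_eq_sum, L96B, PiLp.add_apply, PiLp.sub_apply,
    Finset.mul_sum, ← Finset.sum_add_distrib]
  exact Finset.sum_congr rfl fun j _ => by ring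

lemma two_mul_inner_L96B (v δ : EuclideanSpace ℝ (ZMod J)) :
    2 * ⟪L96B v δ, δ⟫ = -⟪L96B δ δ, v⟫ := by
  have h := inner_L96B_add_add_inner_L96B_sub v δ
  simp only [inner_L96B_self_self] at h
  linarith

lemma inner_L96P_self (δ : EuclideanSpace ℝ (ZMod J)) : ⟪L96P δ, δ⟫ = ‖L96P δ‖ ^ 2 := by
  rw [← real_inner_self_eq_norm_sq, EuclideanSpace.real_inner_eq_sum,
    EuclideanSpace.real_inner_eq_sum]
  refine Finset.sum_congr rfl fun j _ => ?_
  by_cases h : j.val % 3 = 0 <;> simp [L96P, h]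

end L96

theorem l96_coercivity_general {J : ℕ} [NeZero J]
    (c : ℝ)
    (hcB : ∀ u w : EuclideanSpace ℝ (ZMod J),
      |⟪L96B u u, w⟫| ≤ c * ‖u‖ * ‖w‖ * ‖L96P u‖)
    (K η : ℝ) (hη : 0 < η)
    (v : EuclideanSpace ℝ (ZMod J)) (hv : ‖v‖ ^ 2 ≤ K) :
    ∀ δ : EuclideanSpace ℝ (ZMod J),
      (1 - c ^ 2 * K * η / 4) * ‖δ‖ ^ 2 ≤
        ⟪δ + (2 : ℝ) • L96B v δ + L96B δ δ + (1 / η) • L96P δ, δ⟫ := by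
  intro δ
  have expand : ⟪δ + (2 : ℝ) • L96B v δ + L96B δ δ + (1 / η) • L96P δ, δ⟫
      = ‖δ‖ ^ 2 - ⟪L96B δ δ, v⟫ + ‖L96P δ‖ ^ 2 / η := by
    rw [inner_add_left, inner_add_left, inner_add_left, real_inner_smul_left,
      real_inner_smul_left, real_inner_self_eq_norm_sq, two_mul_inner_L96B,
      inner_L96B_self_self, inner_L96P_self]
    ring
  have young : ⟪L96B δ δ, v⟫ ≤ c ^ 2 * K * η / 4 * ‖δ‖ ^ 2 + ‖L96P δ‖ ^ 2 / η :=
    calc ⟪L96B δ δ, v⟫ ≤ c * ‖δ‖ * ‖v‖ * ‖L96P δ‖ := (le_abs_self _).trans (hcB δ v)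
      _ ≤ η / 4 * (c * ‖δ‖ * ‖v‖) ^ 2 + ‖L96P δ‖ ^ 2 / η := mul_le_mul_sq_add_sq_div hη _ _
      _ ≤ c ^ 2 * K * η / 4 * ‖δ‖ ^ 2 + ‖L96P δ‖ ^ 2 / η := by
        have : (c * ‖δ‖ * ‖v‖) ^ 2 ≤ c ^ 2 * ‖δ‖ ^ 2 * K := by
          rw [mul_pow, mul_pow]
          gcongr
        have := mul_le_mul_of_nonneg_left this (by positivity : 0 ≤ η / 4)
        linarith
  rw [expand]
  linarith

/-- coercivity of the nudged linearization:
`⟨δ + 2B(v,δ) + B(δ,δ) + (1/η)Pδ, δ⟩ ≥ (1 − c²Kη/4)|δ|²`. -/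
theorem l96_coercivity {J J' : ℕ} [NeZero J] (hJ' : 1 ≤ J') (hJ : J = 3 * J')
    (c : ℝ) (hc : 0 < c)
    (hcB : ∀ u w : EuclideanSpace ℝ (ZMod J),
      |⟪L96B u u, w⟫| ≤ c * ‖u‖ * ‖w‖ * ‖L96P u‖)
    (K η : ℝ) (hK : 0 < K) (hη : 0 < η)
    (v : EuclideanSpace ℝ (ZMod J)) (hv : ‖v‖ ^ 2 ≤ K) :
    ∀ δ : EuclideanSpace ℝ (ZMod J),
      (1 - c ^ 2 * K * η / 4) * ‖δ‖ ^ 2 ≤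
        ⟪δ + (2 : ℝ) • L96B v δ + L96B δ δ + (1 / η) • L96P δ, δ⟫ :=
  l96_coercivity_general c hcB K η hη v hv
end
end

section
/- (Growth bound on the observed part of the error.) Let F > 0, K = 2JF², and β = 2(2√K − 1), and assume β > 0. Let u and v be solutions of the Lorenz '96 equation on [0,h] with |v(t)|² ≤ K for all t ∈ [0,h]. Set δ(t) = u(t) − v(t), R0 = |δ(0)| + |Pδ(0)|, and A1(t) = (16K/β)(e^{βt} − 1) + (2R0²/β)(e^{2βt} − 1). Then for all t ∈ [0,h], |Pδ(t)|² ≤ A1(t)·|δ(0)|² + |Pδ(0)|². -/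
open scoped RealInnerProductSpace

noncomputable section

/-!
The error `δ = u - v` solves `δ' = -δ - B(δ, δ) - 2 B(δ, v)`. Since `⟪B(a, a), a⟫ = 0` and
`|⟪B(a, w), a⟫| ≤ ‖w‖ ‖a‖²`, one gets `(‖δ‖²)' ≤ (4√K - 2) ‖δ‖² = β ‖δ‖²`, so by Grönwall
`‖δ(t)‖² ≤ e^{βt} ‖δ(0)‖²`. For the observed part, `(‖Pδ‖²)' = 2⟪Pδ, δ'⟫` and `⟪Pδ, δ⟫ = ‖Pδ‖²`,
so the crude bound `‖B(a, b)‖ ≤ 2 ‖a‖ ‖b‖` gives `(‖Pδ‖²)' ≤ 16 K ‖δ‖² + 4 ‖δ‖⁴`. Inserting the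
energy bound and `‖δ(0)‖ ≤ R0` bounds this by the derivative of `A1(t) ‖δ(0)‖²`.
-/

open Set

theorem EuclideanSpace.sq_apply_le_norm_sq {ι : Type*} [Fintype ι] (x : EuclideanSpace ℝ ι)
    (i : ι) : x i ^ 2 ≤ ‖x‖ ^ 2 := by
  simpa [Real.norm_eq_abs, sq_abs] using pow_le_pow_left₀ (norm_nonneg _) (PiLp.norm_apply_le x i) 2

section ShiftedProduct

variable {ι : Type*} [Fintype ι] [AddGroup ι]

theorem Fintype.sum_eq_sum_of_sub_eq_shift {M : Type*} [AddCommGroup M] {f g φ : ι → M}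
    (c : ι) (h : ∀ j, f j - g j = φ (j + c) - φ j) : ∑ j, f j = ∑ j, g j := by
  rw [← sub_eq_zero, ← Finset.sum_sub_distrib]
  simp only [h, Finset.sum_sub_distrib, sub_eq_zero]
  exact Equiv.sum_comp (Equiv.addRight c) φ

def shiftedProduct (x y : EuclideanSpace ℝ ι) (c d : ι) : EuclideanSpace ℝ ι :=
  WithLp.toLp 2 fun j => x (j + c) * y (j + d)

theorem norm_shiftedProduct_le (x y : EuclideanSpace ℝ ι) (c d : ι) :
    ‖shiftedProduct x y c d‖ ≤ ‖x‖ * ‖y‖ := by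
  refine (pow_le_pow_iff_left₀ (norm_nonneg _) (by positivity) two_ne_zero).mp ?_
  calc ‖shiftedProduct x y c d‖ ^ 2 = ∑ j, x (j + c) ^ 2 * y (j + d) ^ 2 := by
        simp [EuclideanSpace.real_norm_sq_eq, shiftedProduct, mul_pow]
    _ ≤ ∑ j, x (j + c) ^ 2 * ‖y‖ ^ 2 := Finset.sum_le_sum fun j _ =>
        mul_le_mul_of_nonneg_left (y.sq_apply_le_norm_sq _) (sq_nonneg _)
    _ = (‖x‖ * ‖y‖) ^ 2 := by
        rw [← Finset.sum_mul, Fintype.sum_equiv (Equiv.addRight c) (fun j => x (j + c) ^ 2)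
          (fun j => x j ^ 2) fun _ => rfl, ← EuclideanSpace.real_norm_sq_eq, mul_pow]

end ShiftedProduct

section Lorenz96

variable {J : ℕ} [NeZero J]

theorem L96B_eq_shiftedProduct (a b : EuclideanSpace ℝ (ZMod J)) :
    L96B a b = -(1 / 2 : ℝ) • (shiftedProduct b a (-1) 1 + shiftedProduct a b (-1) 1
      - shiftedProduct b a (-2) (-1) - shiftedProduct a b (-2) (-1)) := by
  ext j
  simp [L96B, shiftedProduct, sub_eq_add_neg]
  ring

theorem norm_L96B_le (a b : EuclideanSpace ℝ (ZMod J)) : ‖L96B a b‖ ≤ 2 * ‖a‖ * ‖b‖ := by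
  rw [L96B_eq_shiftedProduct, norm_smul]
  have h₁ := norm_shiftedProduct_le b a (-1) 1
  have h₂ := norm_shiftedProduct_le a b (-1) 1
  have h₃ := norm_shiftedProduct_le b a (-2) (-1)
  have h₄ := norm_shiftedProduct_le a b (-2) (-1)
  have h := norm_sub_le_of_le (norm_sub_le_of_le (norm_add_le_of_le h₁ h₂) h₃) h₄
  norm_num
  linarith

/-- Summation by parts on the cycle `ZMod J`: the terms of `⟪B(a, w), a⟫` not containing `w j`
cancel against their shifts by one. -/
theorem real_inner_L96B_left (a w : EuclideanSpace ℝ (ZMod J)) :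
    ⟪L96B a w, a⟫ = -(1 / 2) * ⟪w, shiftedProduct a a (-1) (-2) - shiftedProduct a a (-1) 1⟫ := by
  simp only [PiLp.inner_apply, L96B, shiftedProduct, Finset.mul_sum]
  refine Fintype.sum_eq_sum_of_sub_eq_shift 1 (φ := fun j =>
    -(1 / 2) * (w (j - 2) * a (j - 1) * a j + a (j - 2) * a (j - 1) * w j
      + a (j - 2) * w (j - 1) * a j)) fun j => ?_
  simp [sub_eq_add_neg, add_assoc]
  norm_num
  ring

theorem real_inner_L96B_self (a : EuclideanSpace ℝ (ZMod J)) : ⟪L96B a a, a⟫ = 0 := by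
  rw [real_inner_L96B_left, PiLp.inner_apply, mul_eq_zero]
  right
  refine (Fintype.sum_eq_sum_of_sub_eq_shift 1 (g := 0)
    (φ := fun j => -(a (j - 2) * a (j - 1) * a j)) fun j => ?_).trans Finset.sum_const_zero
  simp [shiftedProduct, sub_eq_add_neg, add_assoc]
  norm_num
  ring

theorem abs_real_inner_L96B_left_le (a w : EuclideanSpace ℝ (ZMod J)) :
    |⟪L96B a w, a⟫| ≤ ‖w‖ * ‖a‖ ^ 2 := by
  rw [real_inner_L96B_left, abs_mul]
  have h := norm_sub_le_of_le (norm_shiftedProduct_le a a (-1) (-2))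
    (norm_shiftedProduct_le a a (-1) 1)
  calc |(-(1 / 2) : ℝ)| * |⟪w, shiftedProduct a a (-1) (-2) - shiftedProduct a a (-1) 1⟫|
      ≤ 1 / 2 * (‖w‖ * (‖a‖ * ‖a‖ + ‖a‖ * ‖a‖)) := by
        norm_num
        exact (abs_real_inner_le_norm _ _).trans (by gcongr)
    _ = ‖w‖ * ‖a‖ ^ 2 := by ring

theorem L96B_add_self_sub_self (a b : EuclideanSpace ℝ (ZMod J)) :
    L96B (a + b) (a + b) - L96B b b = L96B a a + (2 : ℝ) • L96B a b := by
  ext j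
  simp [L96B]
  ring

def L96Pₗ : EuclideanSpace ℝ (ZMod J) →ₗ[ℝ] EuclideanSpace ℝ (ZMod J) where
  toFun := L96P
  map_add' x y := by
    ext j
    simp only [L96P, PiLp.add_apply]
    split_ifs <;> simp
  map_smul' c x := by
    ext j
    simp [L96P]

theorem HasDerivAt.L96P {δ : ℝ → EuclideanSpace ℝ (ZMod J)} {δ' : EuclideanSpace ℝ (ZMod J)}
    {t : ℝ} (h : HasDerivAt δ δ' t) : HasDerivAt (fun s => L96P (δ s)) (L96P δ') t :=
  (LinearMap.toContinuousLinearMap L96Pₗ).hasFDerivAt.comp_hasDerivAt (f := δ) t h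

theorem real_inner_L96P_L96P (x y : EuclideanSpace ℝ (ZMod J)) :
    ⟪L96P x, L96P y⟫ = ⟪L96P x, y⟫ := by
  simp only [PiLp.inner_apply, L96P]
  refine Finset.sum_congr rfl fun j _ => ?_
  split_ifs <;> simp

def L96ErrorField (d v : EuclideanSpace ℝ (ZMod J)) : EuclideanSpace ℝ (ZMod J) :=
  -d - L96B d d - (2 : ℝ) • L96B d v

theorem L96Sol.hasDerivAt_sub {F : ℝ} {I : Set ℝ} {u v : ℝ → EuclideanSpace ℝ (ZMod J)}
    (hu : L96Sol F I u) (hv : L96Sol F I v) {t : ℝ} (ht : t ∈ I) :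
    HasDerivAt (fun s => u s - v s) (L96ErrorField (u t - v t) (v t)) t := by
  refine ((hu t ht).sub (hv t ht)).congr_deriv ?_
  have h := L96B_add_self_sub_self (u t - v t) (v t)
  rw [sub_add_cancel] at h
  rw [L96ErrorField, sub_sub, ← h]
  abel

theorem real_inner_L96ErrorField_le (d v : EuclideanSpace ℝ (ZMod J)) :
    2 * ⟪d, L96ErrorField d v⟫ ≤ (4 * ‖v‖ - 2) * ‖d‖ ^ 2 := by
  have hB := neg_le_of_abs_le (abs_real_inner_L96B_left_le d v)
  rw [real_inner_comm] at hB
  simp only [L96ErrorField, inner_sub_right, inner_neg_right, inner_smul_right,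
    real_inner_self_eq_norm_sq, real_inner_comm (L96B d d) d, real_inner_L96B_self]
  linarith

theorem real_inner_L96P_L96ErrorField_le (d v : EuclideanSpace ℝ (ZMod J)) :
    2 * ⟪L96P d, L96ErrorField d v⟫ ≤ 16 * ‖v‖ ^ 2 * ‖d‖ ^ 2 + 4 * ‖d‖ ^ 4 := by
  have hdd : ⟪L96P d, d⟫ = ‖L96P d‖ ^ 2 := by
    rw [← real_inner_L96P_L96P, real_inner_self_eq_norm_sq]
  have hBdd := neg_le_of_abs_le ((abs_real_inner_le_norm (L96P d) (L96B d d)).trans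
    (mul_le_mul_of_nonneg_left (norm_L96B_le d d) (norm_nonneg _)))
  have hBdv := neg_le_of_abs_le ((abs_real_inner_le_norm (L96P d) (L96B d v)).trans
    (mul_le_mul_of_nonneg_left (norm_L96B_le d v) (norm_nonneg _)))
  simp only [L96ErrorField, inner_sub_right, inner_neg_right, inner_smul_right, hdd]
  -- with `Y = ‖L96P d‖` the left side is at most `-2Y² + 4‖d‖²Y + 8‖v‖‖d‖Y`,
  -- which falls short of the right side by `(Y - 2‖d‖²)² + (Y - 4‖v‖‖d‖)²`
  nlinarith [sq_nonneg (‖L96P d‖ - 2 * ‖d‖ ^ 2), sq_nonneg (‖L96P d‖ - 4 * ‖v‖ * ‖d‖)]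

theorem L96Sol.norm_sub_sq_le_exp {F h κ : ℝ} {u v : ℝ → EuclideanSpace ℝ (ZMod J)}
    (hu : L96Sol F (Icc 0 h) u) (hv : L96Sol F (Icc 0 h) v)
    (hvκ : ∀ s ∈ Icc 0 h, ‖v s‖ ≤ κ) :
    ∀ t ∈ Icc 0 h, ‖u t - v t‖ ^ 2 ≤ Real.exp ((4 * κ - 2) * t) * ‖u 0 - v 0‖ ^ 2 := by
  have hderiv s (hs : s ∈ Icc 0 h) := (hu.hasDerivAt_sub hv hs).norm_sq
  intro t ht
  have := le_gronwallBound_of_liminf_deriv_right_le (ε := 0) (K := 4 * κ - 2)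
    (fun s hs => (hderiv s hs).continuousAt.continuousWithinAt)
    (fun s hs _ hr => (hderiv s (Ico_subset_Icc_self hs)).hasDerivWithinAt.liminf_right_slope_le hr)
    le_rfl (fun s hs => ?_) t ht
  · rwa [gronwallBound_ε0, sub_zero, mul_comm] at this
  · have hs' := Ico_subset_Icc_self hs
    have := real_inner_L96ErrorField_le (u s - v s) (v s)
    have := mul_le_mul_of_nonneg_right (hvκ s hs') (sq_nonneg ‖u s - v s‖)
    linarith

theorem hasDerivAt_mul_exp_mul_sub_one (c β t : ℝ) :
    HasDerivAt (fun s => c * (Real.exp (β * s) - 1)) (c * β * Real.exp (β * t)) t := by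
  have := (((hasDerivAt_id t).const_mul β).exp.sub_const 1).const_mul c
  simpa [mul_comm, mul_assoc, mul_left_comm] using this

theorem L96Sol.norm_L96P_sub_sq_le {F h K β R0 : ℝ} (hβ : β ≠ 0)
    {u v : ℝ → EuclideanSpace ℝ (ZMod J)}
    (hu : L96Sol F (Icc 0 h) u) (hv : L96Sol F (Icc 0 h) v)
    (hvK : ∀ s ∈ Icc 0 h, ‖v s‖ ^ 2 ≤ K)
    (hδ : ∀ s ∈ Icc 0 h, ‖u s - v s‖ ^ 2 ≤ Real.exp (β * s) * ‖u 0 - v 0‖ ^ 2)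
    (hR0 : ‖u 0 - v 0‖ ≤ R0) :
    ∀ t ∈ Icc 0 h, ‖L96P (u t - v t)‖ ^ 2 ≤
      ((16 * K / β) * (Real.exp (β * t) - 1)
          + (2 * R0 ^ 2 / β) * (Real.exp (2 * β * t) - 1)) * ‖u 0 - v 0‖ ^ 2
        + ‖L96P (u 0 - v 0)‖ ^ 2 := by
  set d := ‖u 0 - v 0‖
  have hf s (hs : s ∈ Icc 0 h) := (hu.hasDerivAt_sub hv hs).L96P.norm_sq
  have hB s : HasDerivAt (fun s => ((16 * K / β) * (Real.exp (β * s) - 1)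
      + (2 * R0 ^ 2 / β) * (Real.exp (2 * β * s) - 1)) * d ^ 2 + ‖L96P (u 0 - v 0)‖ ^ 2)
      ((16 * K * Real.exp (β * s) + 4 * R0 ^ 2 * Real.exp (2 * β * s)) * d ^ 2) s := by
    refine ((((hasDerivAt_mul_exp_mul_sub_one _ β s).add
      (hasDerivAt_mul_exp_mul_sub_one _ (2 * β) s)).mul_const _).add_const _).congr_deriv ?_
    field_simp
    ring
  refine image_le_of_deriv_right_le_deriv_boundary
    (fun s hs => (hf s hs).continuousAt.continuousWithinAt)
    (fun s hs => (hf s (Ico_subset_Icc_self hs)).hasDerivWithinAt) (by simp)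
    (fun s _ => (hB s).continuousAt.continuousWithinAt) (fun s _ => (hB s).hasDerivWithinAt)
    fun s hs => ?_
  have hs' := Ico_subset_Icc_self hs
  set X := ‖u s - v s‖
  have hX := hδ s hs'
  have hX4 : X ^ 4 ≤ Real.exp (2 * β * s) * d ^ 2 * R0 ^ 2 := by
    have hexp : Real.exp (2 * β * s) = Real.exp (β * s) ^ 2 := by
      rw [sq, ← Real.exp_add]
      ring_nf
    have hd : d ^ 2 ≤ R0 ^ 2 := pow_le_pow_left₀ (norm_nonneg _) hR0 2
    calc X ^ 4 = (X ^ 2) ^ 2 := by ring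
      _ ≤ (Real.exp (β * s) * d ^ 2) ^ 2 := pow_le_pow_left₀ (sq_nonneg _) hX 2
      _ = Real.exp (2 * β * s) * d ^ 2 * d ^ 2 := by rw [hexp]; ring
      _ ≤ _ := by gcongr
  have hvX := mul_le_mul (hvK s hs') hX (sq_nonneg _) ((sq_nonneg _).trans (hvK s hs'))
  rw [real_inner_L96P_L96P]
  linarith [real_inner_L96P_L96ErrorField_le (u s - v s) (v s)]

end Lorenz96

theorem l96_pdelta_growth_general {J : ℕ} [NeZero J]
    (F h K β R0 : ℝ)
    (hβdef : β = 2 * (2 * Real.sqrt K - 1)) (hβ : 0 < β)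
    (u v : ℝ → EuclideanSpace ℝ (ZMod J))
    (hu : L96Sol F (Set.Icc 0 h) u) (hv : L96Sol F (Set.Icc 0 h) v)
    (hvK : ∀ t ∈ Set.Icc (0:ℝ) h, ‖v t‖ ^ 2 ≤ K)
    (hR0 : R0 = ‖u 0 - v 0‖ + ‖L96P (u 0 - v 0)‖) :
    ∀ t ∈ Set.Icc (0:ℝ) h,
      ‖L96P (u t - v t)‖ ^ 2 ≤
        ((16 * K / β) * (Real.exp (β * t) - 1)
            + (2 * R0 ^ 2 / β) * (Real.exp (2 * β * t) - 1)) * ‖u 0 - v 0‖ ^ 2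
          + ‖L96P (u 0 - v 0)‖ ^ 2 := by
  have hδ := hu.norm_sub_sq_le_exp hv fun s hs => Real.le_sqrt_of_sq_le (hvK s hs)
  refine hu.norm_L96P_sub_sq_le hβ.ne' hv hvK (fun s hs => ?_) ?_
  · convert hδ s hs using 4
    rw [hβdef]
    ring
  · rw [hR0]
    exact le_add_of_nonneg_right (norm_nonneg _)

/-- growth bound on the observed part of the error:
`|Pδ(t)|² ≤ A1(t)|δ(0)|² + |Pδ(0)|²` with
`A1(t) = (16K/β)(e^{βt} − 1) + (2R0²/β)(e^{2βt} − 1)`. -/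
theorem l96_pdelta_growth {J J' : ℕ} [NeZero J] (hJ' : 1 ≤ J') (hJ : J = 3 * J')
    (F h K β R0 : ℝ) (hF : 0 < F)
    (hK : K = 2 * J * F ^ 2) (hβdef : β = 2 * (2 * Real.sqrt K - 1)) (hβ : 0 < β)
    (u v : ℝ → EuclideanSpace ℝ (ZMod J))
    (hu : L96Sol F (Set.Icc 0 h) u) (hv : L96Sol F (Set.Icc 0 h) v)
    (hvK : ∀ t ∈ Set.Icc (0:ℝ) h, ‖v t‖ ^ 2 ≤ K)
    (hR0 : R0 = ‖u 0 - v 0‖ + ‖L96P (u 0 - v 0)‖) :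
    ∀ t ∈ Set.Icc (0:ℝ) h,
      ‖L96P (u t - v t)‖ ^ 2 ≤
        ((16 * K / β) * (Real.exp (β * t) - 1)
            + (2 * R0 ^ 2 / β) * (Real.exp (2 * β * t) - 1)) * ‖u 0 - v 0‖ ^ 2
          + ‖L96P (u 0 - v 0)‖ ^ 2 :=
  l96_pdelta_growth_general F h K β R0 hβdef hβ u v hu hv hvK hR0
end
end
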